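/- Let a and b be coprime positive integers and k ≥ 1. Then for every integer j ≥ ab, j ∈ S_k(a,b) if and only if j - ab ∈ S_{k-1}(a,b); that is, j has more than k representations in the form ma + nb (m, n ∈ ℕ) if and only if j - ab has more than k - 1 such representations. -/

import Mathlib

/-!
Among the representations `j + ab = m a + n b`, those with `m ≥ b` correspond to the
representations of `j` via `m ↦ m - b`. Since `a` is invertible modulo `b`, exactly one
representation has `m < b`: `m` is the residue of `(j + ab) a⁻¹` modulo `b`, and `ma < ab`
leaves room for `n`. Hence `r(j + ab) = r(j) + 1`.
-/

/-- `repCount a b j` is the number of representations of `j` in the form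
`m * a + n * b` with `m, n : ℕ`. -/
noncomputable def repCount (a b j : ℕ) : ℕ :=
  Nat.card {p : ℕ × ℕ // p.1 * a + p.2 * b = j}

section

variable {a b : ℕ}

theorem repCount_eq_ncard (t : ℕ) :
    repCount a b t = {p : ℕ × ℕ | p.1 * a + p.2 * b = t}.ncard :=
  Nat.card_coe_set_eq _

theorem finite_setOf_rep (ha : 0 < a) (hb : 0 < b) (t : ℕ) :
    {p : ℕ × ℕ | p.1 * a + p.2 * b = t}.Finite :=
  (Set.finite_Iic t |>.prod (Set.finite_Iic t)).subset fun p (hp : p.1 * a + p.2 * b = t) =>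
    ⟨by simp only [Set.mem_Iic]; nlinarith, by simp only [Set.mem_Iic]; nlinarith⟩

theorem exists_rep_fst_lt (hb : 0 < b) (hab : a.Coprime b) {t : ℕ} (ht : (b - 1) * a ≤ t) :
    ∃ m n, m < b ∧ m * a + n * b = t := by
  have : NeZero b := ⟨hb.ne'⟩
  set m := ((t : ZMod b) * (a : ZMod b)⁻¹).val
  have hm : m < b := ZMod.val_lt _
  have hmod : m * a ≡ t [MOD b] := by
    rw [← ZMod.natCast_eq_natCast_iff, Nat.cast_mul, ZMod.natCast_zmod_val, mul_assoc,
      mul_comm _ (a : ZMod b), ZMod.coe_mul_inv_eq_one a hab, mul_one]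
  have hle : m * a ≤ t := (Nat.mul_le_mul_right a (Nat.le_sub_one_of_lt hm)).trans ht
  obtain ⟨n, hn⟩ := (Nat.modEq_iff_dvd' hle).mp hmod
  exact ⟨m, n, hm, by rw [mul_comm n]; omega⟩

theorem eq_of_rep_eq_of_fst_lt (hab : a.Coprime b) {m n m' n' : ℕ} (hm : m < b) (hm' : m' < b)
    (h : m * a + n * b = m' * a + n' * b) : m = m' ∧ n = n' := by
  have hmod : m * a ≡ m' * a [MOD b] := by
    simpa [Nat.ModEq, Nat.add_mul_mod_self_right] using congrArg (· % b) h
  have hmm : m = m' :=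
    (hmod.cancel_right_of_coprime (Nat.coprime_comm.mp hab)).eq_of_lt_of_lt hm hm'
  subst hmm
  exact ⟨rfl, Nat.eq_of_mul_eq_mul_right (by omega) (Nat.add_left_cancel h)⟩

theorem setOf_rep_add_mul {m n t : ℕ} (hab : a.Coprime b) (hm : m < b)
    (hmn : m * a + n * b = t + a * b) :
    {p : ℕ × ℕ | p.1 * a + p.2 * b = t + a * b} =
      insert (m, n) (Prod.map (· + b) id '' {p | p.1 * a + p.2 * b = t}) := by
  ext ⟨m', n'⟩
  simp only [Set.mem_ofPred_eq, Set.mem_insert_iff, Set.mem_image, Prod.map_apply, id, Prod.mk.injEq, Prod.exists]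
  constructor
  · intro h
    by_cases hbm : b ≤ m'
    · refine Or.inr ⟨m' - b, n', ?_, by omega, rfl⟩
      have : (m' - b) * a + b * a = m' * a := by rw [← Nat.add_mul, Nat.sub_add_cancel hbm]
      nlinarith
    · exact Or.inl (eq_of_rep_eq_of_fst_lt hab (by omega) hm (h.trans hmn.symm))
  · rintro (⟨rfl, rfl⟩ | ⟨m'', n'', h, rfl, rfl⟩)
    · exact hmn
    · rw [← h]; ring

theorem repCount_add_mul (ha : 0 < a) (hb : 0 < b) (hab : a.Coprime b) (t : ℕ) :
    repCount a b (t + a * b) = repCount a b t + 1 := by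
  obtain ⟨m, n, hm, hmn⟩ := exists_rep_fst_lt hb hab (t := t + a * b) (by
    nlinarith [Nat.sub_le b 1])
  have hnotMem : (m, n) ∉ Prod.map (· + b) id '' {p | p.1 * a + p.2 * b = t} := by
    rintro ⟨p, -, hp⟩
    have : p.1 + b = m := congrArg Prod.fst hp
    omega
  rw [repCount_eq_ncard, repCount_eq_ncard, setOf_rep_add_mul hab hm hmn,
    Set.ncard_insert_of_notMem hnotMem ((finite_setOf_rep ha hb t).image _),
    Set.ncard_image_of_injective _ ((add_left_injective b).prodMap Function.injective_id)]

end

/-- For `k ≥ 1` and `j ≥ ab`, the integer `j` has more than `k` representations if and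
only if `j - ab` has more than `k - 1` representations. -/
theorem mem_Sk_iff (a b k : ℕ) (ha : 0 < a) (hb : 0 < b) (hab : Nat.Coprime a b)
    (hk : 1 ≤ k) :
    ∀ j : ℕ, a * b ≤ j → (k < repCount a b j ↔ k - 1 < repCount a b (j - a * b)) := by
  intro j hj
  obtain ⟨t, rfl⟩ := Nat.exists_eq_add_of_le' hj
  rw [Nat.add_sub_cancel, repCount_add_mul ha hb hab t]
  omega
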